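/- If k is even and positive, the clique number of the graph G_k equals p(k) = 2: there is a clique of size 2 but no clique of size 3. -/

import Mathlib

/-!
If `f - g` is a bijection of a finite abelian group `A`, then `∑ j, (f j - g j)` is the sum `S` of
all elements of `A`. A triangle `f, g, h` therefore gives
`S = ∑ (f - h) = ∑ (f - g) + ∑ (g - h) = 2 S`, i.e. `S = 0`. For `A = ZMod (2m)` the sum of all
residues is `m (2m - 1) = -m ≠ 0`, so there is no triangle, while `id` and `0` are adjacent.
-/

open Finset Function

theorem ZMod.sum_univ_eq_natCast_sum_range (n : ℕ) :
    ∑ x : ZMod (n + 1), x = ((∑ i ∈ range (n + 1), i : ℕ) : ZMod (n + 1)) := by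
  rw [Nat.cast_sum, sum_range]
  exact Fintype.sum_congr _ _ fun i => (Fin.cast_val_eq_self i).symm

theorem ZMod.sum_univ_ne_zero_of_even {k : ℕ} [NeZero k] (hk : Even k) :
    ∑ x : ZMod k, x ≠ 0 := by
  obtain ⟨m, hm⟩ := hk
  obtain ⟨n, rfl⟩ : ∃ n, k = n + 1 := Nat.exists_eq_succ_of_ne_zero (NeZero.ne k)
  have gauss : ∑ i ∈ range (n + 1), i = m * n := by
    apply Nat.eq_of_mul_eq_mul_right two_pos
    rw [sum_range_id_mul_two, Nat.add_sub_cancel, hm]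
    ring
  have hn : (n : ZMod (n + 1)) = -1 :=
    eq_neg_of_add_eq_zero_left (by exact_mod_cast ZMod.natCast_self _)
  rw [ZMod.sum_univ_eq_natCast_sum_range, gauss, Nat.cast_mul, hn, mul_neg_one, neg_ne_zero, Ne,
    ZMod.natCast_eq_zero_iff]
  exact Nat.not_dvd_of_pos_of_lt (by omega) (by omega)

def differenceGraph (α : Type*) [AddGroup α] : SimpleGraph (α → α) :=
  SimpleGraph.fromRel fun f g => Bijective fun j => f j - g j

namespace differenceGraph

variable {α : Type*}

theorem adj_iff [AddGroup α] {f g : α → α} :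
    (differenceGraph α).Adj f g ↔ f ≠ g ∧ Bijective fun j => f j - g j := by
  have hneg : (Bijective fun j => g j - f j) ↔ Bijective fun j => f j - g j := by
    simpa only [Function.comp_def, neg_sub] using
      (neg_involutive.bijective.of_comp_iff' fun j => g j - f j).symm
  rw [differenceGraph, SimpleGraph.fromRel_adj, hneg, or_self]

theorem exists_isNClique_two [AddGroup α] [Nontrivial α] :
    ∃ s, (differenceGraph α).IsNClique 2 s := by
  classical
  have hne : id ≠ (0 : α → α) := fun h => by
    obtain ⟨a, ha⟩ := exists_ne (0 : α)
    exact ha (congrFun h a)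
  have hadj : (differenceGraph α).Adj id 0 :=
    adj_iff.2 ⟨hne, by simp only [id, Pi.zero_apply, sub_zero]; exact bijective_id⟩
  refine ⟨{id, 0}, ?_, card_pair hne⟩
  rw [coe_pair]
  exact SimpleGraph.isClique_pair.2 fun _ => hadj

variable [AddCommGroup α] [Fintype α]

theorem sum_sub_eq_sum_univ {f g : α → α} (h : (differenceGraph α).Adj f g) :
    ∑ j, (f j - g j) = ∑ a, a :=
  (adj_iff.1 h).2.sum_comp id

theorem cliqueFree_three (h : ∑ a : α, a ≠ 0) : (differenceGraph α).CliqueFree 3 := by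
  classical
  intro s hs
  obtain ⟨f, g, e, hfg, hfe, hge, -⟩ := SimpleGraph.is3Clique_iff.1 hs
  have htriangle : ∑ j, (f j - e j) = ∑ j, (f j - g j) + ∑ j, (g j - e j) := by
    rw [← sum_add_distrib]
    simp only [sub_add_sub_cancel]
  rw [sum_sub_eq_sum_univ hfg, sum_sub_eq_sum_univ hfe, sum_sub_eq_sum_univ hge] at htriangle
  exact h (by simpa using htriangle)

end differenceGraph

theorem clique_number_even (k : ℕ) (hk : 0 < k) (hke : Even k) :
    (∃ s : Finset (ZMod k → ZMod k),
        (SimpleGraph.fromRel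
          (fun f g : ZMod k → ZMod k =>
            Function.Bijective (fun j => f j - g j))).IsNClique 2 s) ∧
      (SimpleGraph.fromRel
        (fun f g : ZMod k → ZMod k =>
          Function.Bijective (fun j => f j - g j))).CliqueFree 3 := by
  have : NeZero k := ⟨hk.ne'⟩
  have : Fact (1 < k) := ⟨by obtain ⟨m, rfl⟩ := hke; omega⟩
  exact ⟨differenceGraph.exists_isNClique_two,
    differenceGraph.cliqueFree_three (ZMod.sum_univ_ne_zero_of_even hke)⟩
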